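/- In the longitudinal SCM of Figure 1, if every causal pathway from any treatment node A_i to the outcome Y has a mediator node M_j as its last interventional node, then the natural direct effect of any longitudinal modified treatment policy is zero. -/
import Mathlib


open MeasureTheory Classical

/-- Proposition S1: in a finite structural-equation model whose variables
`V k = f k (history) (U k)` respect the ordering of a DAG (the dependence relation `dep`
only points to earlier nodes), with treatment nodes `𝒜`, mediator nodes `ℳ`, and outcome
node `o` (the last node), if every causal pathway from a treatment node to the outcome has a
mediator node as its last interventional node, then the natural direct effect of any
longitudinal modified treatment policies `d₁`, `d₂` is zero:
`E[Y(Ā^{d₂}, M̄(Ā^{d₁}))] = E[Y(Ā^{d₁}, M̄(Ā^{d₁}))]`. Here `V₁` is the counterfactual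
process under policy `d₁` and `W` is the counterfactual process under policy `d₂` with the
mediators set to their values under `d₁`. -/
theorem stmt14 {Ω : Type*} [MeasurableSpace Ω] (μ : Measure Ω) [IsProbabilityMeasure μ]
    (n : ℕ)
    -- structural functions: node `k`'s value is `f k h u` for history `h` and exogenous `u`
    (f : Fin (n + 1) → (Fin (n + 1) → ℝ) → ℝ → ℝ)
    -- exogenous variables
    (U : Fin (n + 1) → Ω → ℝ)
    -- the direct-dependence (parent) relation of the DAG: `dep k j` means `f k` depends on
    -- node `j`; it respects the time ordering
    (dep : Fin (n + 1) → Fin (n + 1) → Prop)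
    (hdep_lt : ∀ k j, dep k j → j < k)
    (hdep : ∀ k h h' u, (∀ j, dep k j → h j = h' j) → f k h u = f k h' u)
    -- treatment nodes, mediator nodes, and the outcome node
    (𝒜 ℳ : Set (Fin (n + 1))) (hdisj : Disjoint 𝒜 ℳ)
    (o : Fin (n + 1)) (ho : o = Fin.last n) (hoA : o ∉ 𝒜) (hoM : o ∉ ℳ)
    -- modified treatment policies: new treatment value as a function of the natural value
    -- of treatment and the history
    (d₁ d₂ : Fin (n + 1) → ℝ → (Fin (n + 1) → ℝ) → ℝ)
    -- counterfactual process under `d₁`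
    (V₁ : Ω → Fin (n + 1) → ℝ)
    (hV₁ : ∀ ω k, V₁ ω k =
      if k ∈ 𝒜 then d₁ k (f k (V₁ ω) (U k ω)) (V₁ ω) else f k (V₁ ω) (U k ω))
    -- counterfactual process under `d₂` with mediators fixed at their `d₁` values `M̄(Ā^{d₁})`
    (W : Ω → Fin (n + 1) → ℝ)
    (hW : ∀ ω k, W ω k =
      if k ∈ ℳ then V₁ ω k
      else if k ∈ 𝒜 then d₂ k (f k (W ω) (U k ω)) (W ω)
      else f k (W ω) (U k ω))
    -- edges of the causal graph
    (edge : Fin (n + 1) → Fin (n + 1) → Prop)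
    (hedge : ∀ j k, edge j k ↔ j < k ∧ dep k j)
    -- hypothesis: on every causal pathway from a treatment node to the outcome, the last
    -- interventional node is a mediator node
    (hpath : ∀ (len : ℕ) (p : Fin (len + 1) → Fin (n + 1)),
      p 0 ∈ 𝒜 → p (Fin.last len) = o →
      (∀ i : Fin len, edge (p i.castSucc) (p i.succ)) →
      ∀ i, (p i ∈ 𝒜 ∪ ℳ ∧ ∀ j, i < j → p j ∉ 𝒜 ∪ ℳ) → p i ∈ ℳ) :
    ∫ ω, W ω o ∂μ = ∫ ω, V₁ ω o ∂μ := by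
  have key : ∀ m : ℕ, ∀ k : Fin (n + 1), (k : ℕ) < m → ∀ ω (len : ℕ)
      (p : Fin (len + 1) → Fin (n + 1)), p 0 = k → p (Fin.last len) = o →
      (∀ i : Fin len, edge (p i.castSucc) (p i.succ)) →
      (∀ i, i ≠ 0 → p i ∉ 𝒜 ∪ ℳ) → W ω k = V₁ ω k := by
    intro m
    induction m with
    | zero => intro k hk; omega
    | succ m ih =>
      intro k hk ω len p hp0 hpl hpe hpn
      by_cases hkM : k ∈ ℳ
      · rw [hW]; simp [hkM]
      by_cases hkA : k ∈ 𝒜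
      · exfalso
        have h0 := hpath len p (hp0 ▸ hkA) hpl hpe 0
          ⟨by rw [hp0]; exact Or.inl hkA,
           fun j hj => hpn j (Fin.pos_iff_ne_zero.mp hj)⟩
        rw [hp0] at h0
        exact hkM h0
      · rw [hW, hV₁]
        simp only [hkM, hkA, if_false]
        apply hdep
        intro j hj
        have hjk := hdep_lt k j hj
        have hjm : (j : ℕ) < m := by
          have := (Fin.lt_iff_val_lt_val.mp hjk); omega
        refine ih j hjm ω (len + 1) (Fin.cons j p) (Fin.cons_zero _ _) ?_ ?_ ?_
        · rw [← Fin.succ_last, Fin.cons_succ, hpl]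
        · intro i
          induction i using Fin.cases with
          | zero =>
            simp only [Fin.castSucc_zero, Fin.cons_zero, Fin.succ_zero_eq_one]
            have : (1 : Fin (len + 2)) = Fin.succ 0 := rfl
            rw [this, Fin.cons_succ, hp0]
            exact (hedge j k).mpr ⟨hjk, hj⟩
          | succ m' =>
            rw [← Fin.succ_castSucc, Fin.cons_succ, Fin.cons_succ]
            exact hpe m'
        · intro i hi
          induction i using Fin.cases with
          | zero => exact absurd rfl hi
          | succ m' =>
            rw [Fin.cons_succ]
            by_cases hm' : m' = 0
            · subst hm'; rw [hp0]
              intro hc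
              rcases hc with h | h
              · exact hkA h
              · exact hkM h
            · exact hpn m' hm'
  have hpt : ∀ ω, W ω o = V₁ ω o := by
    intro ω
    refine key (n + 1) o o.isLt ω 0 (fun _ => o) rfl rfl (fun i => i.elim0) ?_
    intro i hi
    exact absurd (Fin.fin_one_eq_zero i) hi
  exact integral_congr_ae (Filter.Eventually.of_forall fun ω => hpt ω)
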